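/- arXiv:2301.12501 — 2 statements merged into one kernel-verified Lean document; each statement's English description precedes it below -/
import Mathlib

section
/- Let α > 0 and c > 0 be real numbers and let g : ℝ → ℝ be differentiable at a point t with g(t) > 0. Then the function s ↦ E_α(−c · g(s)^α) is differentiable at t with derivative (d/dt) E_α(−c g(t)^α) = −c g'(t) g(t)^{α−1} E_{α,α}(−c g(t)^α). -/
/-! Differentiating the series termwise, `(k + 1) / Γ(α (k + 1) + 1) = 1 / (α Γ(α k + α))`, so
`E_α' = E_{α,α} / α`; the chain rule with `(g^α)' = α g^{α-1} g'` then gives the formula.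
Termwise differentiation is justified by domination with the series of `E_{α,α}` on balls, which
converges by the ratio test thanks to the log-convexity bound `Γ(y + α) ≥ Γ(y) (y - 1)^α`. -/

/-- The one-parameter Mittag-Leffler function `E_α(x) = Σ_{k=0}^∞ x^k / Γ(α k + 1)`. -/
noncomputable def mittagLeffler (α : ℝ) (x : ℝ) : ℝ :=
  ∑' k : ℕ, x ^ k / Real.Gamma (α * k + 1)

/-- The two-parameter Mittag-Leffler function `E_{α,β}(x) = Σ_{k=0}^∞ x^k / Γ(α k + β)`. -/
noncomputable def mittagLeffler2 (α β : ℝ) (x : ℝ) : ℝ :=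
  ∑' k : ℕ, x ^ k / Real.Gamma (α * k + β)

open Filter Metric

namespace Real

theorem Gamma_mul_rpow_le_Gamma_add {a x : ℝ} (ha : 0 < a) (hx : 1 < x) :
    Gamma x * (x - 1) ^ a ≤ Gamma (x + a) := by
  have hx₁ : 0 < x - 1 := by linarith
  have hΓ : Gamma x = (x - 1) * Gamma (x - 1) := by
    simpa using Gamma_add_one hx₁.ne'
  have hlog : log (Gamma x) = log (x - 1) + log (Gamma (x - 1)) := by
    rw [hΓ, log_mul hx₁.ne' (Gamma_pos_of_pos hx₁).ne']
  have hslope := convexOn_log_Gamma.slope_mono_adjacent (x := x - 1) (y := x) (z := x + a)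
    hx₁ (by simp only [Set.mem_Ioi]; linarith) (by linarith) (by linarith)
  simp only [Function.comp_apply, sub_sub_cancel, div_one, add_sub_cancel_left] at hslope
  rw [le_div_iff₀ ha, hlog, add_sub_cancel_right] at hslope
  rw [← log_le_log_iff (by positivity) (Gamma_pos_of_pos (by linarith)),
    log_mul (by positivity) (by positivity), log_rpow hx₁, hlog]
  linarith

end Real

section MittagLeffler

variable {α : ℝ}

theorem summable_pow_div_Gamma_mul_add (hα : 0 < α) (β x : ℝ) :
    Summable fun k : ℕ => x ^ k / Real.Gamma (α * k + β) := by
  have hlin : Tendsto (fun k : ℕ => α * k + β - 1) atTop atTop :=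
    tendsto_atTop_add_const_right _ _ <| tendsto_atTop_add_const_right _ _ <|
      tendsto_natCast_atTop_atTop.const_mul_atTop hα
  refine summable_of_ratio_norm_eventually_le (r := 1 / 2) (by norm_num) ?_
  filter_upwards [hlin.eventually_gt_atTop 0,
    ((tendsto_rpow_atTop hα).comp hlin).eventually_ge_atTop (2 * |x|)] with k hk hkx
  simp only [Function.comp_apply] at hkx
  set y := α * k + β
  have hΓ : 0 < Real.Gamma y := Real.Gamma_pos_of_pos (by linarith)
  have hyα : Real.Gamma y * (y - 1) ^ α ≤ Real.Gamma (y + α) :=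
    Real.Gamma_mul_rpow_le_Gamma_add hα (by linarith)
  have hsucc : α * ((k + 1 : ℕ) : ℝ) + β = y + α := by push_cast; ring
  have hyα_pos : 0 < Real.Gamma (y + α) :=
    (mul_pos hΓ (Real.rpow_pos_of_pos hk α)).trans_le hyα
  simp only [hsucc, norm_div, pow_succ, norm_mul, norm_pow, Real.norm_eq_abs, abs_of_pos hΓ,
    abs_of_pos hyα_pos]
  have hratio : |x| / (y - 1) ^ α ≤ 1 / 2 := by
    rw [div_le_iff₀ (by positivity)]
    linarith
  calc |x| ^ k * |x| / Real.Gamma (y + α)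
      ≤ |x| ^ k * |x| / (Real.Gamma y * (y - 1) ^ α) := by gcongr
    _ = |x| ^ k / Real.Gamma y * (|x| / (y - 1) ^ α) := mul_div_mul_comm _ _ _ _
    _ ≤ 1 / 2 * (|x| ^ k / Real.Gamma y) := by
      rw [mul_comm (1 / 2)]
      gcongr

theorem mittagLeffler_eq_one_add_tsum (hα : 0 < α) (x : ℝ) :
    mittagLeffler α x = 1 + ∑' k : ℕ, x ^ (k + 1) / Real.Gamma (α * (k + 1 : ℕ) + 1) := by
  rw [mittagLeffler, (summable_pow_div_Gamma_mul_add hα 1 x).tsum_eq_zero_add]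
  simp

theorem hasDerivAt_pow_succ_div_Gamma (hα : 0 < α) (k : ℕ) (y : ℝ) :
    HasDerivAt (fun z => z ^ (k + 1) / Real.Gamma (α * (k + 1 : ℕ) + 1))
      (y ^ k / Real.Gamma (α * k + α) / α) y := by
  have hpos : 0 < α * k + α := by positivity
  have hΓ : Real.Gamma (α * (k + 1 : ℕ) + 1) = (α * k + α) * Real.Gamma (α * k + α) := by
    rw [← Real.Gamma_add_one hpos.ne']
    push_cast
    ring_nf
  refine ((hasDerivAt_pow (k + 1) y).div_const _).congr_deriv ?_
  rw [hΓ, Nat.add_sub_cancel]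
  have hΓ_ne := (Real.Gamma_pos_of_pos hpos).ne'
  field_simp
  push_cast
  ring

theorem hasDerivAt_mittagLeffler (hα : 0 < α) (x : ℝ) :
    HasDerivAt (mittagLeffler α) (mittagLeffler2 α α x / α) x := by
  set R := |x| + 1
  have hbound : ∀ (k : ℕ), ∀ y ∈ ball (0 : ℝ) R,
      ‖y ^ k / Real.Gamma (α * k + α) / α‖ ≤ R ^ k / Real.Gamma (α * k + α) / α := by
    intro k y hy
    have hΓ : 0 < Real.Gamma (α * k + α) := Real.Gamma_pos_of_pos (by positivity)
    rw [mem_ball_zero_iff, Real.norm_eq_abs] at hy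
    rw [norm_div, norm_div, norm_pow, Real.norm_eq_abs, Real.norm_of_nonneg hΓ.le,
      Real.norm_of_nonneg hα.le]
    gcongr
  rw [funext (mittagLeffler_eq_one_add_tsum hα), mittagLeffler2, ← tsum_div_const]
  refine HasDerivAt.const_add 1 <| hasDerivAt_tsum_of_isPreconnected
    ((summable_pow_div_Gamma_mul_add hα α R).div_const α) isOpen_ball
    (convex_ball _ _).isPreconnected (fun k y _ => hasDerivAt_pow_succ_div_Gamma hα k y) hbound
    (mem_ball_self (by positivity)) (by simp) (by simp [R])

end MittagLeffler

theorem mittagLeffler_comp_hasDerivAt_general (α c : ℝ) (hα : 0 < α)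
    (g : ℝ → ℝ) (g' t : ℝ) (hg : HasDerivAt g g' t) (hgt : 0 < g t) :
    HasDerivAt (fun s => mittagLeffler α (-c * g s ^ α))
      (-c * g' * g t ^ (α - 1) * mittagLeffler2 α α (-c * g t ^ α)) t := by
  have hinner : HasDerivAt (fun s => -c * g s ^ α) (-c * (g' * α * g t ^ (α - 1))) t :=
    (hg.rpow_const (Or.inl hgt.ne')).const_mul (-c)
  refine ((hasDerivAt_mittagLeffler hα _).comp t hinner).congr_deriv ?_
  field_simp

/-- Let α > 0 and c > 0 be real and let g : ℝ → ℝ be differentiable at t with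
g(t) > 0. Then s ↦ E_α(−c·g(s)^α) is differentiable at t with derivative
−c g'(t) g(t)^{α−1} E_{α,α}(−c g(t)^α). -/
theorem mittagLeffler_comp_hasDerivAt (α c : ℝ) (hα : 0 < α) (hc : 0 < c)
    (g : ℝ → ℝ) (g' t : ℝ) (hg : HasDerivAt g g' t) (hgt : 0 < g t) :
    HasDerivAt (fun s => mittagLeffler α (-c * g s ^ α))
      (-c * g' * g t ^ (α - 1) * mittagLeffler2 α α (-c * g t ^ α)) t :=
  mittagLeffler_comp_hasDerivAt_general α c hα g g' t hg hgt
end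

section
/- Let 0 < α < 1, λ > 0, D > 0 be real numbers, and let g : [0, ∞) → ℝ be continuous on [0, t], differentiable on (0, t), with g(0) = 0 and g'(s) > 0 for 0 < s < t. Then the function T(τ) := E_α(−λ D g(τ)^α) satisfies the g-fractional relaxation equation at t: (1/Γ(1−α)) ∫_0^t (g(t) − g(τ))^{−α} T'(τ) dτ = −λ D E_α(−λ D g(t)^α). -/
/-!
Write `T = φ ∘ g` with `φ u = E_α (c u^α)`, `c = -λD`. As `g` increases strictly from
`g 0 = 0`, the substitution `u = g τ` turns the `g`-Caputo derivative at `t` into the ordinary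
Caputo derivative of `φ` at `G = g t`. Term-by-term differentiation gives
`φ' u = ∑ₖ c^(k+1) u^(α(k+1)-1) / Γ(α(k+1))`, and the Beta integral
`∫₀^G (G-u)^(-α) u^(β-1) du = G^(β-α) Γ(1-α) Γ(β) / Γ(β+1-α)` sends the `k`-th term to
`Γ(1-α) c (c G^α)^k / Γ(αk+1)`. Summing, which is legitimate because the series of absolute
values is again a Mittag-Leffler series, yields `Γ(1-α) c E_α(c G^α)`. The Mittag-Leffler series
converges by the ratio test and the Gautschi-type bound `x^α Γ(x+1-α) ≤ Γ(x+1)`, a consequence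
of the log-convexity of `Γ`.
-/

open MeasureTheory

open Real Set Filter

lemma Real.rpow_mul_Gamma_add_one_sub_le {x a : ℝ} (hx : 0 < x) (ha : 0 < a) (ha1 : a < 1) :
    x ^ a * Gamma (x + 1 - a) ≤ Gamma (x + 1) := by
  have hconv := Gamma_mul_add_mul_le_rpow_Gamma_mul_rpow_Gamma hx (by linarith : 0 < x + 1)
    ha (sub_pos.2 ha1) (add_sub_cancel a 1)
  rw [show a * x + (1 - a) * (x + 1) = x + 1 - a by ring, Gamma_add_one hx.ne',
    mul_rpow hx.le (Gamma_pos_of_pos hx).le] at hconv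
  calc x ^ a * Gamma (x + 1 - a)
      ≤ x ^ a * (Gamma x ^ a * (x ^ (1 - a) * Gamma x ^ (1 - a))) := by gcongr
    _ = (x ^ a * x ^ (1 - a)) * (Gamma x ^ a * Gamma x ^ (1 - a)) := by ring
    _ = Gamma (x + 1) := by
      rw [← rpow_add hx, ← rpow_add (Gamma_pos_of_pos hx), add_sub_cancel, rpow_one, rpow_one,
        Gamma_add_one hx.ne']

lemma summable_pow_div_Gamma_mul_add_one {α : ℝ} (hα : 0 < α) (hα1 : α < 1) (x : ℝ) :
    Summable (fun k : ℕ => x ^ k / Gamma (α * k + 1)) := by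
  refine summable_of_ratio_norm_eventually_le (r := 1 / 2) (by norm_num) ?_
  have hgrowth : Tendsto (fun k : ℕ => (α * k + α) ^ α) atTop atTop :=
    (tendsto_rpow_atTop hα).comp <| tendsto_atTop_add_const_right _ _ <|
      tendsto_natCast_atTop_atTop.const_mul_atTop hα
  filter_upwards [hgrowth.eventually_ge_atTop (2 * |x|)] with k hk
  have hΓ : 0 < Gamma (α * k + 1) := Gamma_pos_of_pos (by positivity)
  have hratio : (α * k + α) ^ α * Gamma (α * k + 1) ≤ Gamma (α * ↑(k + 1) + 1) := by
    have := rpow_mul_Gamma_add_one_sub_le (x := α * k + α) (by positivity) hα hα1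
    rwa [show α * (k : ℝ) + α + 1 - α = α * k + 1 by ring,
      show α * (k : ℝ) + α + 1 = α * ↑(k + 1) + 1 by push_cast; ring] at this
  have hΓ' : 0 < Gamma (α * ↑(k + 1) + 1) := Gamma_pos_of_pos (by positivity)
  simp only [norm_div, norm_pow, Real.norm_eq_abs, abs_of_pos hΓ, abs_of_pos hΓ', pow_succ,
    abs_mul, abs_pow]
  calc |x| ^ k * |x| / Gamma (α * ↑(k + 1) + 1)
      ≤ |x| ^ k * |x| / ((α * k + α) ^ α * Gamma (α * k + 1)) := by gcongr
    _ = |x| / (α * k + α) ^ α * (|x| ^ k / Gamma (α * k + 1)) := by ring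
    _ ≤ 1 / 2 * (|x| ^ k / Gamma (α * k + 1)) := by
      refine mul_le_mul_of_nonneg_right ?_ (by positivity)
      rw [div_le_iff₀ (by positivity)]
      linarith

lemma mittagLeffler_eq_one_add {α : ℝ} (hα : 0 < α) (hα1 : α < 1) (x : ℝ) :
    mittagLeffler α x = 1 + ∑' k : ℕ, x ^ (k + 1) / Gamma (α * (k + 1) + 1) := by
  rw [mittagLeffler, (summable_pow_div_Gamma_mul_add_one hα hα1 x).tsum_eq_zero_add]
  simp

lemma hasDerivAt_mittagLeffler_s6 {α : ℝ} (hα : 0 < α) (hα1 : α < 1) (x : ℝ) :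
    HasDerivAt (mittagLeffler α) (∑' k : ℕ, (k + 1) * x ^ k / Gamma (α * (k + 1) + 1)) x := by
  set R := |x| + 1
  have hR : 1 ≤ R := le_add_of_nonneg_left (abs_nonneg x)
  have hbound : Summable (fun k : ℕ => (2 * R) ^ (k + 1) / Gamma (α * (k + 1) + 1)) := by
    simpa using (summable_nat_add_iff 1).2 (summable_pow_div_Gamma_mul_add_one hα hα1 (2 * R))
  have hterm (k : ℕ) (y : ℝ) : HasDerivAt (fun y => y ^ (k + 1) / Gamma (α * (k + 1) + 1))
      ((k + 1) * y ^ k / Gamma (α * (k + 1) + 1)) y := by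
    simpa using (hasDerivAt_pow (k + 1) y).div_const (Gamma (α * (k + 1) + 1))
  have hderiv_le (k : ℕ) (y : ℝ) (hy : y ∈ Metric.ball 0 R) :
      ‖(k + 1) * y ^ k / Gamma (α * (k + 1) + 1)‖ ≤
        (2 * R) ^ (k + 1) / Gamma (α * (k + 1) + 1) := by
    have hy : |y| ≤ R := by simpa using (Metric.mem_ball.1 hy).le
    rw [norm_div, Real.norm_of_nonneg (Gamma_pos_of_pos (by positivity)).le]
    gcongr
    calc ‖((k : ℝ) + 1) * y ^ k‖ = (k + 1) * |y| ^ k := by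
          rw [norm_mul, norm_pow, Real.norm_eq_abs, Real.norm_eq_abs, abs_of_pos (by positivity)]
      _ ≤ (2 : ℝ) ^ (k + 1) * R ^ (k + 1) := by
        gcongr
        · exact_mod_cast (Nat.lt_two_pow_self (n := k + 1)).le
        · exact (pow_le_pow_left₀ (abs_nonneg y) hy k).trans (pow_le_pow_right₀ hR k.le_succ)
      _ = (2 * R) ^ (k + 1) := (mul_pow 2 R (k + 1)).symm
  have hseries := hasDerivAt_tsum_of_isPreconnected hbound Metric.isOpen_ball
    (convex_ball (0 : ℝ) R).isPreconnected (fun k y _ => hterm k y) hderiv_le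
    (Metric.mem_ball_self (by positivity)) (by simp) (by simp [R] : x ∈ Metric.ball 0 R)
  rw [funext (mittagLeffler_eq_one_add hα hα1)]
  exact hseries.const_add 1

noncomputable def mittagLefflerRpowDeriv (α c u : ℝ) : ℝ :=
  ∑' k : ℕ, c ^ (k + 1) * u ^ (α * (k + 1) - 1) / Gamma (α * (k + 1))

lemma hasDerivAt_mittagLeffler_mul_rpow {α : ℝ} (hα : 0 < α) (hα1 : α < 1) (c : ℝ) {u : ℝ}
    (hu : 0 < u) :
    HasDerivAt (fun v => mittagLeffler α (c * v ^ α)) (mittagLefflerRpowDeriv α c u) u := by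
  have hinner : HasDerivAt (fun v : ℝ => c * v ^ α) (c * (α * u ^ (α - 1))) u :=
    (hasDerivAt_rpow_const (Or.inl hu.ne')).const_mul c
  refine ((hasDerivAt_mittagLeffler_s6 hα hα1 (c * u ^ α)).comp u hinner).congr_deriv ?_
  rw [mittagLefflerRpowDeriv, ← tsum_mul_right]
  refine tsum_congr fun k => ?_
  have hβ : 0 < α * (k + 1) := by positivity
  have hpow : (u ^ α) ^ k * u ^ (α - 1) = u ^ (α * (k + 1) - 1) := by
    rw [← rpow_natCast, ← rpow_mul hu.le, ← rpow_add hu]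
    ring_nf
  rw [Gamma_add_one hβ.ne', ← hpow]
  field_simp
  ring

lemma Complex.ofReal_rpow_mul_one_sub_rpow {a b x : ℝ} (hx0 : 0 ≤ x) (hx1 : x ≤ 1) :
    ((x ^ (a - 1) * (1 - x) ^ (b - 1) : ℝ) : ℂ) =
      (x : ℂ) ^ ((a : ℂ) - 1) * (1 - (x : ℂ)) ^ ((b : ℂ) - 1) := by
  push_cast [Complex.ofReal_cpow hx0, Complex.ofReal_cpow (sub_nonneg.2 hx1)]
  rfl

lemma intervalIntegrable_rpow_mul_one_sub_rpow {a b : ℝ} (ha : 0 < a) (hb : 0 < b) :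
    IntervalIntegrable (fun x : ℝ => x ^ (a - 1) * (1 - x) ^ (b - 1)) volume 0 1 := by
  have hre := (Complex.betaIntegral_convergent (u := a) (v := b) (by simpa) (by simpa)).norm
  refine hre.congr_ae ?_
  rw [Filter.EventuallyEq, ae_restrict_iff' measurableSet_uIoc]
  refine Filter.Eventually.of_forall fun x hx => ?_
  rw [uIoc_of_le zero_le_one] at hx
  rw [← Complex.ofReal_rpow_mul_one_sub_rpow hx.1.le hx.2, Complex.norm_real,
    Real.norm_of_nonneg]
  exact mul_nonneg (rpow_nonneg hx.1.le _) (rpow_nonneg (sub_nonneg.2 hx.2) _)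

lemma integral_rpow_mul_one_sub_rpow {a b : ℝ} (ha : 0 < a) (hb : 0 < b) :
    ∫ x in (0 : ℝ)..1, x ^ (a - 1) * (1 - x) ^ (b - 1) = Gamma a * Gamma b / Gamma (a + b) := by
  have hbeta := Complex.betaIntegral_eq_Gamma_mul_div (u := a) (v := b) (by simpa) (by simpa)
  rw [Complex.betaIntegral, ← Complex.ofReal_add, Complex.Gamma_ofReal, Complex.Gamma_ofReal,
    Complex.Gamma_ofReal] at hbeta
  apply Complex.ofReal_injective
  push_cast
  rw [← hbeta, ← intervalIntegral.integral_ofReal]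
  refine intervalIntegral.integral_congr fun x hx => ?_
  rw [uIcc_of_le zero_le_one] at hx
  exact Complex.ofReal_rpow_mul_one_sub_rpow hx.1 hx.2

lemma sub_mul_rpow_mul_mul_rpow {a b G x : ℝ} (hG : 0 < G) (hx0 : 0 ≤ x) (hx1 : x ≤ 1) :
    (G - G * x) ^ (a - 1) * (G * x) ^ (b - 1) =
      G ^ (a + b - 2) * (x ^ (b - 1) * (1 - x) ^ (a - 1)) := by
  rw [show G - G * x = G * (1 - x) by ring, mul_rpow hG.le (sub_nonneg.2 hx1),
    mul_rpow hG.le hx0, show a + b - 2 = (a - 1) + (b - 1) by ring, rpow_add hG]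
  ring

lemma intervalIntegrable_sub_rpow_mul_rpow {a b G : ℝ} (ha : 0 < a) (hb : 0 < b) (hG : 0 < G) :
    IntervalIntegrable (fun u : ℝ => (G - u) ^ (a - 1) * u ^ (b - 1)) volume 0 G := by
  have hscaled : IntervalIntegrable (fun x : ℝ => (G - G * x) ^ (a - 1) * (G * x) ^ (b - 1))
      volume (0 / G) (G / G) := by
    rw [zero_div, div_self hG.ne']
    refine ((intervalIntegrable_rpow_mul_one_sub_rpow hb ha).const_mul
      (G ^ (a + b - 2))).congr_ae ?_
    rw [Filter.EventuallyEq, ae_restrict_iff' measurableSet_uIoc]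
    refine Filter.Eventually.of_forall fun x hx => ?_
    rw [uIoc_of_le zero_le_one] at hx
    exact (sub_mul_rpow_mul_mul_rpow hG hx.1.le hx.2).symm
  exact (IntervalIntegrable.comp_mul_left_iff hG.ne').1 hscaled

lemma integral_sub_rpow_mul_rpow {a b G : ℝ} (ha : 0 < a) (hb : 0 < b) (hG : 0 < G) :
    ∫ u in (0 : ℝ)..G, (G - u) ^ (a - 1) * u ^ (b - 1) =
      G ^ (a + b - 1) * (Gamma a * Gamma b / Gamma (a + b)) := by
  have hscale := intervalIntegral.smul_integral_comp_mul_left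
    (fun u : ℝ => (G - u) ^ (a - 1) * u ^ (b - 1)) G (a := 0) (b := 1)
  rw [mul_zero, mul_one] at hscale
  rw [← hscale, intervalIntegral.integral_congr (g := fun x : ℝ =>
      G ^ (a + b - 2) * (x ^ (b - 1) * (1 - x) ^ (a - 1))),
    intervalIntegral.integral_const_mul, integral_rpow_mul_one_sub_rpow hb ha,
    show a + b - 1 = 1 + (a + b - 2) by ring, rpow_add hG, rpow_one, smul_eq_mul, add_comm b a]
  · ring
  · intro x hx
    rw [uIcc_of_le zero_le_one] at hx
    exact sub_mul_rpow_mul_mul_rpow hG hx.1 hx.2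

lemma integral_Ioo_sub_rpow_neg_mul_rpow_div_Gamma {α β G : ℝ} (hα1 : α < 1) (hβ : 0 < β)
    (hG : 0 < G) :
    ∫ u in Ioo 0 G, (G - u) ^ (-α) * (u ^ (β - 1) / Gamma β) =
      Gamma (1 - α) * (G ^ (β - α) / Gamma (β + 1 - α)) := by
  have h := integral_sub_rpow_mul_rpow (sub_pos.2 hα1) hβ hG
  rw [intervalIntegral.integral_of_le hG.le, integral_Ioc_eq_integral_Ioo,
    show 1 - α + β - 1 = β - α by ring, show 1 - α + β = β + 1 - α by ring] at h
  simp only [sub_sub_cancel_left] at h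
  simp_rw [← mul_div_assoc, integral_div, h]
  field_simp [(Gamma_pos_of_pos hβ).ne']

lemma integrableOn_Ioo_sub_rpow_neg_mul_rpow {α β G : ℝ} (hα1 : α < 1) (hβ : 0 < β)
    (hG : 0 < G) :
    IntegrableOn (fun u => (G - u) ^ (-α) * u ^ (β - 1)) (Ioo 0 G) := by
  have h := intervalIntegrable_sub_rpow_mul_rpow (sub_pos.2 hα1) hβ hG
  simp only [sub_sub_cancel_left] at h
  exact ((intervalIntegrable_iff_integrableOn_Ioc_of_le hG.le).1 h).mono_set Ioo_subset_Ioc_self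

lemma integral_Ioo_sub_rpow_neg_mul_mittagLefflerRpowDeriv_term {α G : ℝ} (hα : 0 < α)
    (hα1 : α < 1) (hG : 0 < G) (c : ℝ) (k : ℕ) :
    ∫ u in Ioo 0 G,
        c ^ (k + 1) * ((G - u) ^ (-α) * (u ^ (α * (k + 1) - 1) / Gamma (α * (k + 1)))) =
      Gamma (1 - α) * (c * ((c * G ^ α) ^ k / Gamma (α * k + 1))) := by
  rw [integral_const_mul, integral_Ioo_sub_rpow_neg_mul_rpow_div_Gamma hα1 (by positivity) hG,
    show α * (k + 1) - α = α * k by ring, show α * (k + 1) + 1 - α = α * k + 1 by ring,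
    mul_pow, ← rpow_natCast (G ^ α), ← rpow_mul hG.le]
  ring

lemma integral_Ioo_sub_rpow_neg_mul_mittagLefflerRpowDeriv {α G : ℝ} (hα : 0 < α) (hα1 : α < 1)
    (hG : 0 < G) (c : ℝ) :
    ∫ u in Ioo 0 G, (G - u) ^ (-α) * mittagLefflerRpowDeriv α c u =
      Gamma (1 - α) * (c * mittagLeffler α (c * G ^ α)) := by
  set F : ℝ → ℕ → ℝ → ℝ := fun c k u =>
    c ^ (k + 1) * ((G - u) ^ (-α) * (u ^ (α * (k + 1) - 1) / Gamma (α * (k + 1))))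
  have hsum (u : ℝ) : (G - u) ^ (-α) * mittagLefflerRpowDeriv α c u = ∑' k, F c k u := by
    rw [mittagLefflerRpowDeriv, ← tsum_mul_left]
    exact tsum_congr fun k => by ring
  have hint (k : ℕ) : IntegrableOn (F c k) (Ioo 0 G) := by
    refine Integrable.const_mul ?_ _
    simp_rw [← mul_div_assoc]
    exact (integrableOn_Ioo_sub_rpow_neg_mul_rpow hα1 (by positivity) hG).div_const _
  have hnorm (k : ℕ) : ∫ u in Ioo 0 G, ‖F c k u‖ =
      Gamma (1 - α) * (|c| * ((|c| * G ^ α) ^ k / Gamma (α * k + 1))) := by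
    rw [← integral_Ioo_sub_rpow_neg_mul_mittagLefflerRpowDeriv_term hα hα1 hG |c| k]
    refine setIntegral_congr_fun measurableSet_Ioo fun u hu => ?_
    have hΓ : 0 < Gamma (α * (k + 1)) := Gamma_pos_of_pos (by positivity)
    simp only [F, norm_mul, norm_div, norm_pow, Real.norm_eq_abs, abs_of_pos hΓ,
      abs_of_nonneg (rpow_nonneg (sub_nonneg.2 hu.2.le) _), abs_of_nonneg (rpow_nonneg hu.1.le _)]
  have hsummable : Summable fun k => ∫ u in Ioo 0 G, ‖F c k u‖ := by
    simp_rw [hnorm]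
    exact ((summable_pow_div_Gamma_mul_add_one hα hα1 _).mul_left _).mul_left _
  rw [setIntegral_congr_fun measurableSet_Ioo fun u _ => hsum u,
    ← integral_tsum_of_summable_integral_norm hint hsummable]
  simp_rw [F, integral_Ioo_sub_rpow_neg_mul_mittagLefflerRpowDeriv_term hα hα1 hG c,
    tsum_mul_left, mittagLeffler]

section ChangeOfVariables

variable {g g' : ℝ → ℝ} {a b : ℝ} (hgc : ContinuousOn g (Icc a b))
  (hgd : ∀ s ∈ Ioo a b, HasDerivAt g (g' s) s) (hg' : ∀ s ∈ Ioo a b, 0 < g' s)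
include hgc hgd hg'

lemma strictMonoOn_Icc_of_hasDerivAt_pos : StrictMonoOn g (Icc a b) :=
  strictMonoOn_of_hasDerivWithinAt_pos (convex_Icc a b) hgc
    (fun s hs => (hgd s (by rwa [interior_Icc] at hs)).hasDerivWithinAt)
    (fun s hs => hg' s (by rwa [interior_Icc] at hs))

lemma image_Ioo_of_hasDerivAt_pos (hab : a ≤ b) : g '' Ioo a b = Ioo (g a) (g b) := by
  have hmono := strictMonoOn_Icc_of_hasDerivAt_pos hgc hgd hg'
  refine (image_subset_iff.2 fun s hs => ?_).antisymm (intermediate_value_Ioo hab hgc)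
  exact ⟨hmono (left_mem_Icc.2 hab) (Ioo_subset_Icc_self hs) hs.1,
    hmono (Ioo_subset_Icc_self hs) (right_mem_Icc.2 hab) hs.2⟩

lemma setIntegral_Ioo_deriv_mul_comp (hab : a ≤ b) (f : ℝ → ℝ) :
    ∫ s in Ioo a b, g' s * f (g s) = ∫ u in Ioo (g a) (g b), f u := by
  rw [← image_Ioo_of_hasDerivAt_pos hgc hgd hg' hab, integral_image_eq_integral_abs_deriv_smul
    measurableSet_Ioo (fun s hs => (hgd s hs).hasDerivWithinAt)
    ((strictMonoOn_Icc_of_hasDerivAt_pos hgc hgd hg').injOn.mono Ioo_subset_Icc_self)]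
  exact setIntegral_congr_fun measurableSet_Ioo fun s hs => by
    rw [smul_eq_mul, abs_of_pos (hg' s hs)]

end ChangeOfVariables

theorem g_fractional_relaxation_general (α t lam D : ℝ) (hα : 0 < α) (hα1 : α < 1)
    (ht : 0 < t) (g g' : ℝ → ℝ)
    (hgc : ContinuousOn g (Set.Icc 0 t))
    (hgd : ∀ s ∈ Set.Ioo 0 t, HasDerivAt g (g' s) s)
    (hg0 : g 0 = 0)
    (hg' : ∀ s ∈ Set.Ioo 0 t, 0 < g' s) :
    (1 / Real.Gamma (1 - α)) *
        ∫ τ in Set.Ioo 0 t,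
          (g t - g τ) ^ (-α) *
            deriv (fun τ => mittagLeffler α (-(lam * D) * g τ ^ α)) τ =
      -(lam * D) * mittagLeffler α (-(lam * D) * g t ^ α) := by
  have hmono := strictMonoOn_Icc_of_hasDerivAt_pos hgc hgd hg'
  have hG : 0 < g t := hg0 ▸ hmono (left_mem_Icc.2 ht.le) (right_mem_Icc.2 ht.le) ht
  have hchain : ∀ τ ∈ Ioo 0 t,
      (g t - g τ) ^ (-α) * deriv (fun τ => mittagLeffler α (-(lam * D) * g τ ^ α)) τ =
        g' τ * ((g t - g τ) ^ (-α) * mittagLefflerRpowDeriv α (-(lam * D)) (g τ)) := by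
    intro τ hτ
    have hgτ : 0 < g τ := hg0 ▸ hmono (left_mem_Icc.2 ht.le) (Ioo_subset_Icc_self hτ) hτ.1
    have hT : HasDerivAt (fun τ => mittagLeffler α (-(lam * D) * g τ ^ α))
        (mittagLefflerRpowDeriv α (-(lam * D)) (g τ) * g' τ) τ :=
      (hasDerivAt_mittagLeffler_mul_rpow hα hα1 _ hgτ).comp τ (hgd τ hτ)
    rw [hT.deriv]
    ring
  rw [setIntegral_congr_fun measurableSet_Ioo hchain, setIntegral_Ioo_deriv_mul_comp hgc hgd hg'
    ht.le (fun u => (g t - u) ^ (-α) * mittagLefflerRpowDeriv α (-(lam * D)) u), hg0,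
    integral_Ioo_sub_rpow_neg_mul_mittagLefflerRpowDeriv hα hα1 hG]
  field_simp [(Gamma_pos_of_pos (sub_pos.2 hα1)).ne']

/-- Let 0 < α < 1, λ > 0, D > 0, g continuous on [0,t], differentiable on
(0,t), g(0) = 0, g' > 0 on (0,t). Then T(τ) := E_α(−λ D g(τ)^α) satisfies the
g-fractional relaxation equation at t:
(1/Γ(1−α)) ∫_0^t (g(t) − g(τ))^{−α} T'(τ) dτ = −λ D E_α(−λ D g(t)^α). -/
theorem g_fractional_relaxation (α t lam D : ℝ) (hα : 0 < α) (hα1 : α < 1)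
    (hlam : 0 < lam) (hD : 0 < D) (ht : 0 < t) (g g' : ℝ → ℝ)
    (hgc : ContinuousOn g (Set.Icc 0 t))
    (hgd : ∀ s ∈ Set.Ioo 0 t, HasDerivAt g (g' s) s)
    (hg0 : g 0 = 0)
    (hg' : ∀ s ∈ Set.Ioo 0 t, 0 < g' s) :
    (1 / Real.Gamma (1 - α)) *
        ∫ τ in Set.Ioo 0 t,
          (g t - g τ) ^ (-α) *
            deriv (fun τ => mittagLeffler α (-(lam * D) * g τ ^ α)) τ =
      -(lam * D) * mittagLeffler α (-(lam * D) * g t ^ α) :=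
  g_fractional_relaxation_general α t lam D hα hα1 ht g g' hgc hgd hg0 hg'
end
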